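/- Assume that for every x ∈ X and u ∈ U, sup_{w ∈ W} l(x, u, w) ≥ 0, and that for every y ∈ Y the preimage h^{-1}{y} is a finite indexed set of at most M elements. Suppose there exist a function V̄ : (ℝ ∪ {-∞})^M × Y → ℝ and a stationary information-state feedback η̄ : (ℝ ∪ {-∞})^M × Y → U such that V̄(r, y) ≥ max_{i} r^i for all r, y, and B_{η̄(r,y)} V̄(r, y) ≤ V̄(r, y) for all r, y. Then: (i) the value-iteration sequence V_0, V_1, ... is pointwise bounded above by V̄; and (ii) the policy μ̄_t(y_{0:t}, u_{0:t-1}) = η̄(r_t, y_t), where r_0 = 0 and r_{t+1} = g(r_t, y_{t+1}, y_t, u_t), satisfies sup_N J_{μ̄}^N(y_0) ≤ V̄(0, y_0) for every y_0 ∈ Y. -/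

import Mathlib

open scoped BigOperators

noncomputable section

variable {X U W Y : Type*}

/-- The worst-case history `ρ_t(x, y_{0:t-1}, u_{0:t-1})`: the supremum (in `ℝ ∪ {-∞}`,
with `sSup ∅ = ⊥`) of accumulated stage costs over all disturbance sequences and initial
states whose trajectory reaches `x` at time `t` and is consistent with the measurements. -/
noncomputable def rho (f : X → U → W → X) (h : X → Y) (l : X → U → W → ℝ)
    (t : ℕ) (x : X) (ys : ℕ → Y) (us : ℕ → U) : EReal :=
  sSup { c : EReal | ∃ (xs : ℕ → X) (ws : ℕ → W),
    xs t = x ∧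
    (∀ τ < t, xs (τ + 1) = f (xs τ) (us τ) (ws τ)) ∧
    (∀ τ < t, h (xs τ) = ys τ) ∧
    c = ((∑ τ ∈ Finset.range t, l (xs τ) (us τ) (ws τ) : ℝ) : EReal) }

/-- Inputs generated causally by a strategy `π` from a measurement sequence:
`u_t = μ_t(y_{0:t}, u_{0:t-1})`. -/
noncomputable def inputsOf (π : ℕ → List Y → List U → U) (ys : ℕ → Y) : ℕ → U
  | t => π t ((List.range (t + 1)).map ys) (List.ofFn fun i : Fin t => inputsOf π ys i)
  decreasing_by exact i.isLt

/-- Closed loop: state, list of past measurements and list of past inputs. -/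
noncomputable def loop (f : X → U → W → X) (h : X → Y)
    (π : ℕ → List Y → List U → U) (x0 : X) (ws : ℕ → W) : ℕ → X × List Y × List U
  | 0 => (x0, [h x0], [])
  | t + 1 =>
    let p := loop f h π x0 ws t
    let u := π t p.2.1 p.2.2
    let x' := f p.1 u (ws t)
    (x', p.2.1 ++ [h x'], p.2.2 ++ [u])

/-- Closed-loop state `x_t`. -/
noncomputable def cstate (f : X → U → W → X) (h : X → Y)
    (π : ℕ → List Y → List U → U) (x0 : X) (ws : ℕ → W) (t : ℕ) : X :=
  (loop f h π x0 ws t).1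

/-- Closed-loop input `u_t = μ_t(y_{0:t}, u_{0:t-1})`. -/
noncomputable def cinput (f : X → U → W → X) (h : X → Y)
    (π : ℕ → List Y → List U → U) (x0 : X) (ws : ℕ → W) (t : ℕ) : U :=
  π t (loop f h π x0 ws t).2.1 (loop f h π x0 ws t).2.2

/-- The worst-case `N`-horizon performance `J_π^N(y_0)`. -/
noncomputable def Jcost (f : X → U → W → X) (h : X → Y) (l : X → U → W → ℝ)
    (π : ℕ → List Y → List U → U) (N : ℕ) (y0 : Y) : EReal :=
  sSup { c : EReal | ∃ (x0 : X) (ws : ℕ → W), h x0 = y0 ∧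
    c = ((∑ t ∈ Finset.range (N + 1),
      l (cstate f h π x0 ws t) (cinput f h π x0 ws t) (ws t) : ℝ) : EReal) }

/-- The information-state update `g` (componentwise), for preimages of `h`
enumerated by `ξ : Y → Fin M → X`. -/
noncomputable def gup {M : ℕ} (f : X → U → W → X) (l : X → U → W → ℝ)
    (ξ : Y → Fin M → X) (r : Fin M → EReal) (ynext y : Y) (u : U) : Fin M → EReal :=
  fun i => sSup { c : EReal | ∃ (j : Fin M) (w : W),
    ξ ynext i = f (ξ y j) u w ∧ c = (l (ξ y j) u w : EReal) + r j }

/-- The information state `r_t`, defined recursively by `r_0 = 0` and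
`r_t = g(r_{t-1}, y_t, y_{t-1}, u_{t-1})`. -/
noncomputable def rvec {M : ℕ} (f : X → U → W → X) (l : X → U → W → ℝ)
    (ξ : Y → Fin M → X) (ys : ℕ → Y) (us : ℕ → U) : ℕ → Fin M → EReal
  | 0 => 0
  | t + 1 => gup f l ξ (rvec f l ξ ys us t) (ys (t + 1)) (ys t) (us t)

/-- The Bellman operator `B_u V(r, y) = sup_{v ∈ Y} V(g(r, v, y, u), v)`. -/
noncomputable def Bu {M : ℕ} (f : X → U → W → X) (l : X → U → W → ℝ)
    (ξ : Y → Fin M → X) (V : (Fin M → EReal) → Y → EReal) (u : U)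
    (r : Fin M → EReal) (y : Y) : EReal :=
  ⨆ v : Y, V (gup f l ξ r v y u) v

/-- The Bellman operator `B V(r, y) = inf_{u ∈ U} B_u V(r, y)`. -/
noncomputable def Bop {M : ℕ} (f : X → U → W → X) (l : X → U → W → ℝ)
    (ξ : Y → Fin M → X) (V : (Fin M → EReal) → Y → EReal)
    (r : Fin M → EReal) (y : Y) : EReal :=
  ⨅ u : U, Bu f l ξ V u r y

/-- The value iteration `V_0(r, y) = max_i r^i`, `V_{k+1} = B V_k`. -/
noncomputable def Vseq {M : ℕ} (f : X → U → W → X) (l : X → U → W → ℝ)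
    (ξ : Y → Fin M → X) : ℕ → (Fin M → EReal) → Y → EReal
  | 0 => fun r _ => ⨆ i, r i
  | k + 1 => fun r y => Bop f l ξ (Vseq f l ξ k) r y

/-- The (possibly time-varying) information-state feedback policy
`μ_t(y_{0:t}, u_{0:t-1}) = η_t(r_t, y_t)`, where `r_0 = 0` and
`r_{t+1} = g(r_t, y_{t+1}, y_t, u_t)`. -/
noncomputable def infoStrategyT {M : ℕ} [Nonempty Y] [Nonempty U]
    (f : X → U → W → X) (l : X → U → W → ℝ) (ξ : Y → Fin M → X)
    (η : ℕ → (Fin M → EReal) → Y → U) : ℕ → List Y → List U → U :=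
  fun t ysl usl =>
    η t (rvec f l ξ (fun τ => ysl.getD τ (Classical.arbitrary Y))
          (fun τ => usl.getD τ (Classical.arbitrary U)) (ysl.length - 1))
      (ysl.getD (ysl.length - 1) (Classical.arbitrary Y))

/-- Stationary information-state feedback policy `μ_t(y_{0:t}, u_{0:t-1}) = η(r_t, y_t)`. -/
noncomputable def infoStrategy {M : ℕ} [Nonempty Y] [Nonempty U]
    (f : X → U → W → X) (l : X → U → W → ℝ) (ξ : Y → Fin M → X)
    (η : (Fin M → EReal) → Y → U) : ℕ → List Y → List U → U :=
  infoStrategyT f l ξ (fun _ => η)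

end

/-!
Since `B` is monotone, `V_0 ≤ V̄` and `B V̄ ≤ B_{η̄} V̄ ≤ V̄` give `V_k ≤ V̄` by induction.
Along the closed loop of `μ̄`, the component `r_t^i` is the worst cost of reaching `ξ^i`
consistently with the data, so it dominates the cost accumulated by the actual trajectory at
the index of its current state; and `V̄(r_t, y_t)` is nonincreasing because `u_t = η̄(r_t, y_t)`.
Hence the cost of `N + 1` steps is at most
`max_i r_{N+1}^i ≤ V̄(r_{N+1}, y_{N+1}) ≤ V̄(r_0, y_0) = V̄(0, y_0)`.
-/

section ValueIteration

variable {X U W Y : Type*} {M : ℕ} (f : X → U → W → X) (l : X → U → W → ℝ)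
  (ξ : Y → Fin M → X)

lemma Bu_mono {V V' : (Fin M → EReal) → Y → EReal} (hVV' : V ≤ V') (u : U)
    (r : Fin M → EReal) (y : Y) : Bu f l ξ V u r y ≤ Bu f l ξ V' u r y :=
  iSup_mono fun v => hVV' _ v

lemma Bop_mono {V V' : (Fin M → EReal) → Y → EReal} (hVV' : V ≤ V')
    (r : Fin M → EReal) (y : Y) : Bop f l ξ V r y ≤ Bop f l ξ V' r y :=
  iInf_mono fun u => Bu_mono f l ξ hVV' u r y

lemma Bop_le_of_Bu_le {V : (Fin M → EReal) → Y → EReal} {η : (Fin M → EReal) → Y → U}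
    (hdec : ∀ r y, Bu f l ξ V (η r y) r y ≤ V r y) (r : Fin M → EReal) (y : Y) :
    Bop f l ξ V r y ≤ V r y :=
  (iInf_le _ _).trans (hdec r y)

lemma Vseq_le_of_Bop_le {V : (Fin M → EReal) → Y → EReal}
    (hV0 : ∀ r y, (⨆ i, r i) ≤ V r y) (hB : ∀ r y, Bop f l ξ V r y ≤ V r y) (k : ℕ) :
    Vseq f l ξ k ≤ V := by
  induction k with
  | zero => exact hV0
  | succ k ih => exact fun r y => (Bop_mono f l ξ ih r y).trans (hB r y)

end ValueIteration

section InformationState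

variable {X U W Y : Type*} {M : ℕ} (f : X → U → W → X) (l : X → U → W → ℝ)
  (ξ : Y → Fin M → X)

lemma le_gup {r : Fin M → EReal} {y y' : Y} {u : U} {i j : Fin M} {w : W}
    (hij : ξ y' i = f (ξ y j) u w) : (l (ξ y j) u w : EReal) + r j ≤ gup f l ξ r y' y u i :=
  le_sSup ⟨j, w, hij, rfl⟩

lemma rvec_congr {ys ys' : ℕ → Y} {us us' : ℕ → U} {t : ℕ}
    (hys : ∀ τ ≤ t, ys τ = ys' τ) (hus : ∀ τ < t, us τ = us' τ) :
    rvec f l ξ ys us t = rvec f l ξ ys' us' t := by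
  induction t with
  | zero => rfl
  | succ t ih =>
    simp only [rvec]
    rw [ih (fun τ hτ => hys τ (by omega)) (fun τ hτ => hus τ (by omega)),
      hys (t + 1) le_rfl, hys t (by omega), hus t (by omega)]

lemma exists_sum_le_rvec {h : X → Y} (hξ : ∀ x, x ∈ Set.range (ξ (h x)))
    {xs : ℕ → X} {us : ℕ → U} {ws : ℕ → W}
    (hstep : ∀ t, xs (t + 1) = f (xs t) (us t) (ws t)) (t : ℕ) :
    ∃ i, ξ (h (xs t)) i = xs t ∧
      ((∑ τ ∈ Finset.range t, l (xs τ) (us τ) (ws τ) : ℝ) : EReal)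
        ≤ rvec f l ξ (fun τ => h (xs τ)) us t i := by
  induction t with
  | zero =>
    obtain ⟨i, hi⟩ := hξ (xs 0)
    exact ⟨i, hi, by simp [rvec]⟩
  | succ t ih =>
    obtain ⟨j, hj, hsum⟩ := ih
    obtain ⟨i, hi⟩ := hξ (xs (t + 1))
    refine ⟨i, hi, ?_⟩
    have hij : ξ (h (xs (t + 1))) i = f (ξ (h (xs t)) j) (us t) (ws t) := by
      rw [hi, hj, hstep]
    calc ((∑ τ ∈ Finset.range (t + 1), l (xs τ) (us τ) (ws τ) : ℝ) : EReal)
        = (l (xs t) (us t) (ws t) : EReal)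
            + ((∑ τ ∈ Finset.range t, l (xs τ) (us τ) (ws τ) : ℝ) : EReal) := by
          rw [Finset.sum_range_succ, add_comm, EReal.coe_add]
      _ ≤ (l (ξ (h (xs t)) j) (us t) (ws t) : EReal) + rvec f l ξ (fun τ => h (xs τ)) us t j := by
          rw [hj]; gcongr
      _ ≤ rvec f l ξ (fun τ => h (xs τ)) us (t + 1) i := le_gup f l ξ hij

lemma antitone_value_rvec {V : (Fin M → EReal) → Y → EReal} {η : (Fin M → EReal) → Y → U}
    (hdec : ∀ r y, Bu f l ξ V (η r y) r y ≤ V r y) {ys : ℕ → Y} {us : ℕ → U}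
    (hus : ∀ t, us t = η (rvec f l ξ ys us t) (ys t)) :
    Antitone fun t => V (rvec f l ξ ys us t) (ys t) := by
  refine antitone_nat_of_succ_le fun t => ?_
  calc V (rvec f l ξ ys us (t + 1)) (ys (t + 1))
      ≤ Bu f l ξ V (us t) (rvec f l ξ ys us t) (ys t) :=
        le_iSup (fun v => V (gup f l ξ (rvec f l ξ ys us t) v (ys t) (us t)) v) (ys (t + 1))
    _ ≤ V (rvec f l ξ ys us t) (ys t) := hus t ▸ hdec _ _

end InformationState

lemma List.getD_map_range_of_lt {α : Type*} (g : ℕ → α) {n τ : ℕ} (d : α) (hτ : τ < n) :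
    ((List.range n).map g).getD τ d = g τ := by
  rw [List.getD_eq_getElem _ _ (by simpa using hτ)]
  simp

section ClosedLoop

variable {X U W Y : Type*} (f : X → U → W → X) (h : X → Y)
  (π : ℕ → List Y → List U → U) (x0 : X) (ws : ℕ → W)

lemma cstate_succ (t : ℕ) :
    cstate f h π x0 ws (t + 1) = f (cstate f h π x0 ws t) (cinput f h π x0 ws t) (ws t) :=
  rfl

lemma loop_measurements (t : ℕ) :
    (loop f h π x0 ws t).2.1 = (List.range (t + 1)).map fun τ => h (cstate f h π x0 ws τ) := by
  induction t with
  | zero => rfl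
  | succ t ih =>
    change (loop f h π x0 ws t).2.1 ++ [h (cstate f h π x0 ws (t + 1))] = _
    rw [ih, List.range_succ (n := t + 1), List.map_append, List.map_singleton]

lemma loop_inputs (t : ℕ) :
    (loop f h π x0 ws t).2.2 = (List.range t).map (cinput f h π x0 ws) := by
  induction t with
  | zero => rfl
  | succ t ih =>
    change (loop f h π x0 ws t).2.2 ++ [cinput f h π x0 ws t] = _
    rw [ih, List.range_succ (n := t), List.map_append, List.map_singleton]

lemma cinput_infoStrategy {M : ℕ} [Nonempty Y] [Nonempty U] (l : X → U → W → ℝ)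
    (ξ : Y → Fin M → X) (η : (Fin M → EReal) → Y → U) (t : ℕ) :
    cinput f h (infoStrategy f l ξ η) x0 ws t
      = η (rvec f l ξ (fun τ => h (cstate f h (infoStrategy f l ξ η) x0 ws τ))
            (cinput f h (infoStrategy f l ξ η) x0 ws) t)
          (h (cstate f h (infoStrategy f l ξ η) x0 ws t)) := by
  simp only [cinput, infoStrategy, infoStrategyT, loop_measurements, loop_inputs,
    List.length_map, List.length_range, Nat.add_sub_cancel]
  rw [List.getD_map_range_of_lt _ _ (Nat.lt_succ_self t),
    rvec_congr f l ξ (fun τ hτ => List.getD_map_range_of_lt _ _ (Nat.lt_succ_of_le hτ))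
      (fun τ hτ => List.getD_map_range_of_lt _ _ hτ)]

end ClosedLoop

lemma Jcost_infoStrategy_le {X U W Y : Type*} [Nonempty U] [Nonempty Y] {M : ℕ}
    (f : X → U → W → X) (h : X → Y) (l : X → U → W → ℝ) (ξ : Y → Fin M → X)
    (hξ : ∀ x, x ∈ Set.range (ξ (h x))) {V : (Fin M → EReal) → Y → EReal}
    {η : (Fin M → EReal) → Y → U} (hV0 : ∀ r y, (⨆ i, r i) ≤ V r y)
    (hdec : ∀ r y, Bu f l ξ V (η r y) r y ≤ V r y) (N : ℕ) (y0 : Y) :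
    Jcost f h l (infoStrategy f l ξ η) N y0 ≤ V 0 y0 := by
  refine sSup_le ?_
  rintro c ⟨x0, ws, rfl, rfl⟩
  set π := infoStrategy f l ξ η
  set ys := fun τ => h (cstate f h π x0 ws τ)
  set r := rvec f l ξ ys (cinput f h π x0 ws)
  obtain ⟨i, -, hsum⟩ := exists_sum_le_rvec f l ξ hξ (cstate_succ f h π x0 ws) (N + 1)
  calc _ ≤ r (N + 1) i := hsum
    _ ≤ ⨆ i, r (N + 1) i := le_iSup _ i
    _ ≤ V (r (N + 1)) (ys (N + 1)) := hV0 _ _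
    _ ≤ V (r 0) (ys 0) :=
        antitone_value_rvec f l ξ hdec (cinput_infoStrategy f h x0 ws l ξ η) (Nat.zero_le _)
    _ = V 0 (h x0) := rfl

theorem approximation_theorem_general {X U W Y : Type*} [Nonempty U]
    [Nonempty Y] {M : ℕ} (f : X → U → W → X) (h : X → Y)
    (l : X → U → W → ℝ) (ξ : Y → Fin M → X)
    (hξ : ∀ y : Y, Set.range (ξ y) = {x : X | h x = y})
    (Vbar : (Fin M → EReal) → Y → EReal) (ηbar : (Fin M → EReal) → Y → U)
    (hV0 : ∀ (r : Fin M → EReal) (y : Y), (⨆ i : Fin M, r i) ≤ Vbar r y)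
    (hdec : ∀ (r : Fin M → EReal) (y : Y), Bu f l ξ Vbar (ηbar r y) r y ≤ Vbar r y) :
    (∀ (k : ℕ) (r : Fin M → EReal) (y : Y), Vseq f l ξ k r y ≤ Vbar r y) ∧
    (∀ y0 : Y,
      (⨆ N : ℕ, Jcost f h l (infoStrategy f l ξ ηbar) N y0) ≤ Vbar 0 y0) := by
  have hcover : ∀ x, x ∈ Set.range (ξ (h x)) := fun x => by rw [hξ]; rfl
  exact ⟨fun k => Vseq_le_of_Bop_le f l ξ hV0 (Bop_le_of_Bu_le f l ξ hdec) k,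
    fun y0 => iSup_le fun N => Jcost_infoStrategy_le f h l ξ hcover hV0 hdec N y0⟩

/-- (Approximation.) Under the positivity and finite-preimage
assumptions, suppose there exist `V̄` and a stationary information-state feedback `η̄`
with `V̄(r, y) ≥ max_i r^i` and `B_{η̄(r,y)} V̄(r, y) ≤ V̄(r, y)` for all `r, y`. Then
(i) the value iteration is pointwise bounded above by `V̄`, and (ii) the policy
`μ̄_t(y_{0:t}, u_{0:t-1}) = η̄(r_t, y_t)` (with `r_0 = 0`,
`r_{t+1} = g(r_t, y_{t+1}, y_t, u_t)`) satisfies `sup_N J_{μ̄}^N(y_0) ≤ V̄(0, y_0)`. -/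
theorem approximation_theorem {X U W Y : Type*} [Nonempty X] [Nonempty U]
    [Nonempty W] [Nonempty Y] {M : ℕ} (f : X → U → W → X) (h : X → Y)
    (hsurj : Function.Surjective h) (l : X → U → W → ℝ) (ξ : Y → Fin M → X)
    (pos : ∀ (x : X) (u : U), (0 : EReal) ≤ ⨆ w : W, (l x u w : EReal))
    (hξ : ∀ y : Y, Set.range (ξ y) = {x : X | h x = y})
    (Vbar : (Fin M → EReal) → Y → EReal) (ηbar : (Fin M → EReal) → Y → U)
    (hV0 : ∀ (r : Fin M → EReal) (y : Y), (⨆ i : Fin M, r i) ≤ Vbar r y)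
    (hdec : ∀ (r : Fin M → EReal) (y : Y), Bu f l ξ Vbar (ηbar r y) r y ≤ Vbar r y) :
    (∀ (k : ℕ) (r : Fin M → EReal) (y : Y), Vseq f l ξ k r y ≤ Vbar r y) ∧
    (∀ y0 : Y,
      (⨆ N : ℕ, Jcost f h l (infoStrategy f l ξ ηbar) N y0) ≤ Vbar 0 y0) :=
  approximation_theorem_general f h l ξ hξ Vbar ηbar hV0 hdec
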